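/- arXiv:2209.01328 — 3 statements merged into one kernel-verified Lean document; each statement's English description precedes it below -/
import Mathlib

section
/- Let φ(θ) = Σ_{i=1}^m β_i θ^{y_i} − e^θ where β_i ∈ ℝ and y_1 < ... < y_m are distinct nonnegative integers, and suppose φ(θ) ≤ 0 for all θ ∈ [0,h] with h > 0. Then the equation φ(θ) = 0 has at most m solutions in [0,h]. -/
/-!
Multiplying by `e^{-θ}` turns `φ = P - exp` into `g = P e^{-θ} - 1`, which has the same zeros
and sign as `φ` and derivative `g' = (P' - P) e^{-θ}`. By Rolle, `k` zeros of `g` in `[0,h]` give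
`k - 1` zeros of `g'` strictly between them, and each zero of `g` in the open interval `(0,h)` is a
maximum of `g ≤ 0`, hence a further zero of `g'`. So `P' - P` has at least `2k - 1 - e` positive
roots, where `e` counts the zeros at the endpoints (`e ≤ 1` unless `0` is a zero). By Descartes'
rule of signs this is less than the number of monomials of `P' - P`, which is at most `2m`, and at
most `2m - 1` when `0` is a zero: then `P(0) = 1`, and the constant term of `P` has no counterpart
in `P'`.
-/

open Real Finset Polynomial

theorem Set.finite_and_ncard_le_of_forall_finset_card_le {α : Type*} {s : Set α} {n : ℕ}
    (h : ∀ t : Finset α, ↑t ⊆ s → #t ≤ n) : s.Finite ∧ s.ncard ≤ n := by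
  rw [← Set.encard_le_coe_iff_finite_ncard_le]
  by_contra! hlt
  obtain ⟨t, hts, ht⟩ := Set.exists_subset_encard_eq (Order.add_one_le_of_lt hlt)
  have htfin : t.Finite := Set.finite_of_encard_eq_coe ht
  rw [htfin.encard_eq_coe_toFinset_card] at ht
  norm_cast at ht
  have := h htfin.toFinset (by simpa using hts)
  omega

theorem card_le_card_sdiff_add_one_of_deriv {f : ℝ → ℝ} {a b : ℝ}
    (hf : ContinuousOn f (Set.Icc a b)) {s t : Finset ℝ}
    (hs : ∀ x ∈ s, x ∈ Set.Icc a b ∧ f x = 0) (ht : ∀ x ∈ Set.Ioo a b, deriv f x = 0 → x ∈ t) :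
    #s ≤ #(t \ s) + 1 := by
  refine card_le_sdiff_of_interleaved fun x hx y hy hxy _ => ?_
  obtain ⟨⟨hax, -⟩, hfx⟩ := hs x hx
  obtain ⟨⟨-, hyb⟩, hfy⟩ := hs y hy
  obtain ⟨z, ⟨hxz, hzy⟩, hz⟩ :=
    exists_deriv_eq_zero hxy (hf.mono (Set.Icc_subset_Icc hax hyb)) (hfx.trans hfy.symm)
  exact ⟨z, ht z ⟨hax.trans_lt hxz, hzy.trans_le hyb⟩ hz, hxz, hzy⟩

theorem card_add_card_interior_le_card_add_one_of_nonpos {f : ℝ → ℝ} {a b : ℝ}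
    (hf : ContinuousOn f (Set.Icc a b)) (hle : ∀ x ∈ Set.Icc a b, f x ≤ 0) {s t : Finset ℝ}
    (hs : ∀ x ∈ s, x ∈ Set.Icc a b ∧ f x = 0) (ht : ∀ x ∈ Set.Ioo a b, deriv f x = 0 → x ∈ t) :
    #s + #{x ∈ s | x ∈ Set.Ioo a b} ≤ #t + 1 := by
  have hinterior : {x ∈ s | x ∈ Set.Ioo a b} ⊆ t := fun x hx => by
    obtain ⟨hxs, hx⟩ := mem_filter.mp hx
    have hmax : IsLocalMax f x := Filter.eventually_of_mem (Icc_mem_nhds hx.1 hx.2)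
      fun z hz => (hs x hxs).2 ▸ hle z hz
    exact ht x hx hmax.deriv_eq_zero
  have hdisj : Disjoint (t \ s) {x ∈ s | x ∈ Set.Ioo a b} :=
    sdiff_disjoint.mono_right (filter_subset _ _)
  calc #s + #{x ∈ s | x ∈ Set.Ioo a b}
      ≤ #(t \ s) + #{x ∈ s | x ∈ Set.Ioo a b} + 1 := by
        linarith [card_le_card_sdiff_add_one_of_deriv hf hs ht]
    _ ≤ #t + 1 := by
        rw [← card_union_of_disjoint hdisj]
        gcongr
        exact union_subset sdiff_subset hinterior

namespace Polynomial

variable {R : Type*}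

theorem card_support_sum_monomial_le [Semiring R] {ι : Type*} (s : Finset ι) (y : ι → ℕ)
    (β : ι → R) : #(∑ i ∈ s, monomial (y i) (β i)).support ≤ #s := by
  classical
  refine (card_le_card fun n hn => ?_).trans (card_image_le (f := y))
  rw [mem_support_iff, finsetSum_coeff] at hn
  obtain ⟨i, hi, hne⟩ := exists_ne_zero_of_sum_ne_zero hn
  rw [coeff_monomial] at hne
  exact mem_image.mpr ⟨i, hi, by_contra fun h => hne (if_neg h)⟩

theorem card_support_derivative_le [Semiring R] [IsAddTorsionFree R] (p : R[X]) :
    #(derivative p).support ≤ #(p.support.erase 0) :=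
  card_le_card_of_injOn (· + 1)
    (fun n hn => mem_erase.mpr ⟨n.succ_ne_zero, mem_support_derivative.mp hn⟩)
    (add_left_injective 1).injOn

theorem card_support_derivative_sub_le [Ring R] [IsAddTorsionFree R] (p : R[X]) :
    #(derivative p - p).support ≤ #(p.support.erase 0) + #p.support := by
  rw [sub_eq_add_neg]
  refine (card_le_card support_add).trans ((card_union_le _ _).trans ?_)
  rw [support_neg]
  exact Nat.add_le_add_right (card_support_derivative_le p) _

theorem eq_zero_of_derivative_eq_self [Semiring R] {p : R[X]} (h : derivative p = p) : p = 0 := by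
  by_contra hp
  exact (degree_derivative_lt hp).ne (congrArg degree h)

theorem signVariations_le_card_support_sub_one [Semiring R] [LinearOrder R] (p : R[X]) :
    signVariations p ≤ #p.support - 1 := by
  classical
  have hsigns : (((coeffList p).map SignType.sign).filter (· ≠ 0)).length ≤ #p.support := by
    rw [coeffList, List.map_map, List.filter_map, List.length_map,
      ← List.toFinset_card_of_nodup ((List.nodup_reverse.mpr List.nodup_range).filter _)]
    exact card_le_card fun n hn => by simpa using List.of_mem_filter (List.mem_toFinset.mp hn)
  have := (List.destutter_sublist (· ≠ ·)
    (((coeffList p).map SignType.sign).filter (· ≠ 0))).length_le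
  unfold signVariations
  omega

theorem card_pos_roots_le [CommRing R] [LinearOrder R] [IsStrictOrderedRing R] (p : R[X]) :
    #{x ∈ p.roots.toFinset | 0 < x} ≤ #p.support - 1 := by
  classical
  calc #{x ∈ p.roots.toFinset | 0 < x}
      = p.roots.dedup.countP (0 < ·) := by rw [Multiset.countP_eq_card_filter]; rfl
    _ ≤ p.roots.countP (0 < ·) := Multiset.countP_le_of_le _ (Multiset.dedup_le _)
    _ ≤ signVariations p := roots_countP_pos_le_signVariations p
    _ ≤ #p.support - 1 := signVariations_le_card_support_sub_one p

theorem hasDerivAt_eval_mul_exp_neg (p : ℝ[X]) (x : ℝ) :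
    HasDerivAt (fun x => p.eval x * exp (-x)) ((derivative p - p).eval x * exp (-x)) x :=
  ((p.hasDerivAt x).mul (hasDerivAt_neg x).exp).congr_deriv (by rw [eval_sub]; ring)

theorem card_add_card_interior_le_card_support_derivative_sub {p : ℝ[X]} {h : ℝ}
    (hle : ∀ x ∈ Set.Icc 0 h, p.eval x ≤ exp x) {s : Finset ℝ}
    (hs : ∀ x ∈ s, x ∈ Set.Icc 0 h ∧ p.eval x = exp x) :
    #s + #{x ∈ s | x ∈ Set.Ioo 0 h} ≤ #(derivative p - p).support := by
  rcases s.eq_empty_or_nonempty with rfl | ⟨x₀, hx₀⟩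
  · simp
  have hp : p ≠ 0 := fun hp => (exp_pos x₀).ne (by simpa [hp] using (hs x₀ hx₀).2)
  set q := derivative p - p
  have hq : q ≠ 0 := fun hq => hp (eq_zero_of_derivative_eq_self (sub_eq_zero.mp hq))
  set f := fun x => p.eval x * exp (-x) - 1
  have hf_deriv (x : ℝ) : HasDerivAt f (q.eval x * exp (-x)) x :=
    (p.hasDerivAt_eval_mul_exp_neg x).sub_const 1
  have hf_nonpos (x : ℝ) (hx : x ∈ Set.Icc 0 h) : f x ≤ 0 := by
    have := mul_le_mul_of_nonneg_right (hle x hx) (exp_pos (-x)).le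
    rw [← exp_add, add_neg_cancel, exp_zero] at this
    exact sub_nonpos.mpr this
  have hf_zero (x : ℝ) (hx : x ∈ s) : x ∈ Set.Icc 0 h ∧ f x = 0 := by
    refine ⟨(hs x hx).1, ?_⟩
    simp only [f, (hs x hx).2, ← exp_add, add_neg_cancel, exp_zero, sub_self]
  have hcrit (x : ℝ) (hx : x ∈ Set.Ioo 0 h) (hfx : deriv f x = 0) :
      x ∈ {x ∈ q.roots.toFinset | 0 < x} := by
    rw [(hf_deriv x).deriv] at hfx
    simpa [hq, hx.1] using (mul_eq_zero.mp hfx).resolve_right (exp_pos _).ne'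
  have := card_add_card_interior_le_card_add_one_of_nonpos
    (fun x _ => (hf_deriv x).continuousAt.continuousWithinAt) hf_nonpos hf_zero hcrit
  have := card_pos_roots_le q
  have := card_pos.mpr (nonempty_support_iff.mpr hq)
  omega

theorem card_le_card_support_of_eval_le_exp {p : ℝ[X]} {h : ℝ}
    (hle : ∀ x ∈ Set.Icc 0 h, p.eval x ≤ exp x) {s : Finset ℝ}
    (hs : ∀ x ∈ s, x ∈ Set.Icc 0 h ∧ p.eval x = exp x) : #s ≤ #p.support := by
  have hcount := card_add_card_interior_le_card_support_derivative_sub hle hs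
  have hq_support := card_support_derivative_sub_le p
  have hsplit := card_filter_add_card_filter_not (s := s) (· ∈ Set.Ioo 0 h)
  have hends (x : ℝ) (hx : x ∈ {x ∈ s | x ∉ Set.Ioo 0 h}) : x = 0 ∨ x = h := by
    have := (hs x (mem_filter.mp hx).1).1
    grind
  by_cases h0 : 0 ∈ s
  · have hcoeff : p.coeff 0 ≠ 0 := by
      rw [coeff_zero_eq_eval_zero, (hs 0 h0).2, exp_zero]
      exact one_ne_zero
    have := card_erase_add_one (mem_support_iff.mpr hcoeff)
    have : #{x ∈ s | x ∉ Set.Ioo 0 h} ≤ 2 :=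
      (card_le_card fun x hx => by simpa using hends x hx).trans (card_le_two (a := 0) (b := h))
    omega
  · have : #{x ∈ s | x ∉ Set.Ioo 0 h} ≤ 1 := card_le_one.mpr fun x hx y hy => by
      have := (mem_filter.mp hx).1
      have := (mem_filter.mp hy).1
      grind
    have := card_erase_le (s := p.support) (a := 0)
    omega

end Polynomial

theorem zeros_of_polynomial_minus_exp_general (m : ℕ) (β : Fin m → ℝ)
    (y : Fin m → ℕ) (h : ℝ)
    (φ : ℝ → ℝ) (hφ : ∀ θ, φ θ = (∑ i : Fin m, β i * θ ^ (y i)) - Real.exp θ)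
    (hnonpos : ∀ θ ∈ Set.Icc (0:ℝ) h, φ θ ≤ 0) :
    {θ ∈ Set.Icc (0:ℝ) h | φ θ = 0}.Finite ∧
      {θ ∈ Set.Icc (0:ℝ) h | φ θ = 0}.ncard ≤ m := by
  set P : ℝ[X] := ∑ i, monomial (y i) (β i)
  have hφP (θ : ℝ) : φ θ = P.eval θ - exp θ := by
    simp [hφ, P, eval_finsetSum]
  refine Set.finite_and_ncard_le_of_forall_finset_card_le fun s hs => ?_
  calc #s ≤ #P.support :=
        card_le_card_support_of_eval_le_exp
          (fun x hx => sub_nonpos.mp (hφP x ▸ hnonpos x hx))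
          (fun x hx => ⟨(hs hx).1, sub_eq_zero.mp (hφP x ▸ (hs hx).2)⟩)
    _ ≤ #(univ : Finset (Fin m)) := card_support_sum_monomial_le _ _ _
    _ = m := card_fin m

/-- if `φ(θ) = ∑ i, β i * θ^(y i) − e^θ` is nonpositive on `[0,h]`,
then `φ` has at most `m` zeros in `[0,h]`. -/
theorem zeros_of_polynomial_minus_exp (m : ℕ) (hm : 1 ≤ m) (β : Fin m → ℝ)
    (y : Fin m → ℕ) (hy : Function.Injective y) (h : ℝ) (hh : 0 < h)
    (φ : ℝ → ℝ) (hφ : ∀ θ, φ θ = (∑ i : Fin m, β i * θ ^ (y i)) - Real.exp θ)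
    (hnonpos : ∀ θ ∈ Set.Icc (0:ℝ) h, φ θ ≤ 0) :
    {θ ∈ Set.Icc (0:ℝ) h | φ θ = 0}.Finite ∧
      {θ ∈ Set.Icc (0:ℝ) h | φ θ = 0}.ncard ≤ m :=
  zeros_of_polynomial_minus_exp_general m β y h φ hφ hnonpos
end

section
/- Consider an entire function φ(x) = Σ_{j≥0} a_j x^j with real coefficients. The number of strictly positive zeros of φ counted with multiplicity is at most the number of sign changes in the coefficient sequence a_0, a_1, a_2, .... -/
open Real

/-- The set of sign changes of a real sequence: pairs `i < j` with `a i * a j < 0`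
and all intermediate terms zero. -/
def signChangePairs (a : ℕ → ℝ) : Set (ℕ × ℕ) :=
  {p | p.1 < p.2 ∧ a p.1 * a p.2 < 0 ∧ ∀ k, p.1 < k → k < p.2 → a k = 0}

/-!
Induction on the number of sign changes. If `(i, c)` is a sign change of `a`, then the factor
`j - c` flips exactly the signs of the coefficients before `c`, so `(j - c) * a j` has at least
one sign change fewer; these are the coefficients of `ψ x = x * φ' x - c * φ x`.
As `ψ x = x ^ (c + 1) * (x ^ (-c) * φ x)'`, Rolle's theorem puts a zero of `ψ` strictly between
any two positive zeros of `φ`, and a zero of `φ` of order `m` is one of `ψ` of order `m - 1`;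
so, counted with multiplicity, `ψ` loses at most one positive zero. Without sign changes all
the terms of `a J * φ x = ∑ a J * a j * x ^ j` are nonnegative, so `φ` has no positive zero.
-/

open scoped ContDiff

section SignChanges

variable {a : ℕ → ℝ}

theorem signChangePairs_nonempty_of_mul_neg {i j : ℕ} (hij : i < j) (h : a i * a j < 0) :
    (signChangePairs a).Nonempty := by
  induction hn : j - i using Nat.strong_induction_on generalizing i j with
  | _ n ih =>
  by_cases hzero : ∀ k, i < k → k < j → a k = 0
  · exact ⟨(i, j), hij, h, hzero⟩
  push Not at hzero
  obtain ⟨k, hik, hkj, hk⟩ := hzero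
  -- `(a i * a k) * (a k * a j) = a k ^ 2 * (a i * a j) < 0`
  have : a i * a k < 0 ∨ a k * a j < 0 := by
    by_contra! hpos
    nlinarith [mul_nonneg hpos.1 hpos.2, mul_self_pos.2 hk]
  rcases this with h' | h'
  · exact ih (k - i) (by omega) hik h' rfl
  · exact ih (j - k) (by omega) hkj h' rfl

theorem mul_nonneg_of_signChangePairs_eq_empty (h : signChangePairs a = ∅) (i j : ℕ) :
    0 ≤ a i * a j := by
  rw [← Set.not_nonempty_iff_eq_empty] at h
  by_contra! hneg
  rcases lt_trichotomy i j with hij | rfl | hji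
  · exact h (signChangePairs_nonempty_of_mul_neg hij hneg)
  · exact (mul_self_nonneg (a i)).not_gt hneg
  · exact h (signChangePairs_nonempty_of_mul_neg hji (by rwa [mul_comm]))

theorem signChangePairs_injOn_snd : Set.InjOn Prod.snd (signChangePairs a) := by
  rintro ⟨i, j⟩ ⟨hij, hneg, hzero⟩ ⟨i', j'⟩ ⟨hij', hneg', hzero'⟩ (rfl : j = j')
  have hi : a i ≠ 0 := left_ne_zero_of_mul (hneg.ne)
  have hi' : a i' ≠ 0 := left_ne_zero_of_mul (hneg'.ne)
  simp only [Prod.mk.injEq, and_true]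
  by_contra hne
  rcases Nat.lt_or_gt_of_ne hne with h | h
  · exact hi' (hzero i' h hij')
  · exact hi (hzero' i h hij)

theorem mem_signChangePairs_of_mem_mul {w : ℕ → ℝ} {p : ℕ × ℕ}
    (hp : p ∈ signChangePairs fun k => w k * a k) (hw : 0 < w p.1 * w p.2)
    (hw' : ∀ k, p.1 < k → k < p.2 → w k ≠ 0) : p ∈ signChangePairs a := by
  obtain ⟨hlt, hneg, hzero⟩ := hp
  refine ⟨hlt, ?_, fun k h1 h2 => (mul_eq_zero.1 (hzero k h1 h2)).resolve_left (hw' k h1 h2)⟩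
  refine neg_of_mul_neg_right (a := w p.1 * w p.2) ?_ hw.le
  linarith

theorem mem_signChangePairs_of_mem_sub_mul_of_lt_of_lt {i c p₁ p₂ : ℕ}
    (hic : (i, c) ∈ signChangePairs a)
    (hp : (p₁, p₂) ∈ signChangePairs fun j => ((j : ℝ) - c) * a j) (h₁ : p₁ < c) (h₂ : c < p₂) :
    (c, p₂) ∈ signChangePairs a := by
  obtain ⟨-, hneg, hzero⟩ := hp
  obtain ⟨hi, hsign, hgap⟩ := hic
  have hai : a i ≠ 0 := left_ne_zero_of_mul hsign.ne
  have hweight : ∀ k : ℕ, k ≠ c → (k : ℝ) - c ≠ 0 := fun k hk =>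
    sub_ne_zero.2 (Nat.cast_injective.ne hk)
  have hp₁ : p₁ = i := by
    by_contra hne
    rcases Nat.lt_or_gt_of_ne hne with h | h
    · exact mul_ne_zero (hweight i (by omega)) hai (hzero i h (by omega))
    · exact right_ne_zero_of_mul (left_ne_zero_of_mul hneg.ne) (hgap p₁ h h₁)
  subst hp₁
  have hneg_weight : ((p₁ : ℝ) - c) * (p₂ - c) < 0 := by
    have h₁ : (p₁ : ℝ) < c := by exact_mod_cast h₁
    have h₂ : (c : ℝ) < p₂ := by exact_mod_cast h₂
    nlinarith
  -- the factor `j - c` changes sign between `p₁` and `p₂`, so `a p₁` and `a p₂` have the same sign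
  have hsame : 0 < a p₁ * a p₂ := by nlinarith
  refine ⟨h₂, by nlinarith [mul_self_pos.2 hai], fun k hk₁ hk₂ => ?_⟩
  exact (mul_eq_zero.1 (hzero k (by omega) hk₂)).resolve_left (hweight k (by omega))

theorem snd_mem_of_mem_signChangePairs_sub_mul {i c : ℕ} (hic : (i, c) ∈ signChangePairs a)
    {p : ℕ × ℕ} (hp : p ∈ signChangePairs fun j => ((j : ℝ) - c) * a j) :
    p.2 ∈ Prod.snd '' signChangePairs a \ {c} := by
  obtain ⟨p₁, p₂⟩ := p
  have hlt : p₁ < p₂ := hp.1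
  have hneg := hp.2.1
  have hp₁ : p₁ ≠ c := by rintro rfl; simp at hneg
  have hp₂ : p₂ ≠ c := by rintro rfl; simp at hneg
  refine ⟨?_, hp₂⟩
  by_cases hside : p₁ < c ∧ c < p₂
  · exact ⟨_, mem_signChangePairs_of_mem_sub_mul_of_lt_of_lt hic hp hside.1 hside.2, rfl⟩
  refine ⟨(p₁, p₂), mem_signChangePairs_of_mem_mul hp ?_ fun k _ _ => ?_, rfl⟩
  · rcases Nat.lt_or_gt_of_ne hp₂ with h | h
    · have h₁ : (p₁ : ℝ) < c := by exact_mod_cast (by omega : p₁ < c)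
      have h₂ : (p₂ : ℝ) < c := by exact_mod_cast h
      exact mul_pos_of_neg_of_neg (by linarith) (by linarith)
    · have h₁ : (c : ℝ) < p₁ := by exact_mod_cast (by omega : c < p₁)
      have h₂ : (c : ℝ) < p₂ := by exact_mod_cast h
      exact mul_pos (by linarith) (by linarith)
  · exact sub_ne_zero.2 (Nat.cast_injective.ne (by omega))

theorem encard_signChangePairs_sub_mul_add_one_le {i c : ℕ} (hic : (i, c) ∈ signChangePairs a) :
    (signChangePairs fun j => ((j : ℝ) - c) * a j).encard + 1 ≤ (signChangePairs a).encard := by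
  calc (signChangePairs fun j => ((j : ℝ) - c) * a j).encard + 1
      = (Prod.snd '' signChangePairs fun j => ((j : ℝ) - c) * a j).encard + 1 := by
        rw [signChangePairs_injOn_snd.encard_image]
    _ ≤ (Prod.snd '' signChangePairs a \ {c}).encard + 1 := by
        gcongr
        rintro _ ⟨p, hp, rfl⟩
        exact snd_mem_of_mem_signChangePairs_sub_mul hic hp
    _ = (Prod.snd '' signChangePairs a).encard :=
        Set.encard_sdiff_singleton_add_one ⟨(i, c), hic, rfl⟩
    _ = (signChangePairs a).encard := signChangePairs_injOn_snd.encard_image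

end SignChanges

section PowerSeries

variable {a : ℕ → ℝ} {φ : ℝ → ℝ}

theorem exists_abs_mul_abs_pow_le {r : ℝ} (hs : Summable fun j => a j * r ^ j) :
    ∃ M, ∀ j, |a j| * |r| ^ j ≤ M := by
  obtain ⟨M, hM⟩ := hs.tendsto_atTop_zero.abs.bddAbove_range
  exact ⟨M, fun j => by simpa [abs_mul, abs_pow] using hM ⟨j, rfl⟩⟩

theorem summable_succ_mul_half_pow : Summable fun j : ℕ => ((j : ℝ) + 1) * (1 / 2) ^ j := by
  have hr : ‖(1 / 2 : ℝ)‖ < 1 := by norm_num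
  refine ((summable_pow_mul_geometric_of_norm_lt_one 1 hr).add
    (summable_geometric_of_norm_lt_one hr)).congr fun j => ?_
  simp only [pow_one]
  ring

theorem abs_succ_mul_mul_pow_le {M R y : ℝ} (hR : 0 < R)
    (hM : ∀ j, |a j| * |2 * R| ^ j ≤ M) (hy : |y| ≤ R) (j : ℕ) :
    |((j : ℝ) + 1) * a (j + 1) * y ^ j| ≤ M / (2 * R) * (((j : ℝ) + 1) * (1 / 2) ^ j) := by
  have hcoeff : |a (j + 1)| * R ^ j ≤ M / (2 * R) * (1 / 2) ^ j := by
    have hj := hM (j + 1)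
    rw [abs_of_pos (by positivity : 0 < 2 * R)] at hj
    calc |a (j + 1)| * R ^ j = |a (j + 1)| * (2 * R) ^ (j + 1) / (2 * R) * (1 / 2) ^ j := by
          rw [one_div, inv_pow]
          field_simp
          ring
      _ ≤ M / (2 * R) * (1 / 2) ^ j := by gcongr
  calc |((j : ℝ) + 1) * a (j + 1) * y ^ j| = ((j : ℝ) + 1) * (|a (j + 1)| * |y| ^ j) := by
        rw [abs_mul, abs_mul, abs_pow, abs_of_pos (by positivity : (0 : ℝ) < j + 1)]
        ring
    _ ≤ ((j : ℝ) + 1) * (|a (j + 1)| * R ^ j) := by gcongr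
    _ ≤ ((j : ℝ) + 1) * (M / (2 * R) * (1 / 2) ^ j) := by gcongr
    _ = M / (2 * R) * (((j : ℝ) + 1) * (1 / 2) ^ j) := by ring

theorem hasSum_deriv_and_hasDerivAt (hconv : ∀ x, HasSum (fun j => a j * x ^ j) (φ x)) (x : ℝ) :
    HasSum (fun j : ℕ => ((j : ℝ) + 1) * a (j + 1) * x ^ j) (deriv φ x) ∧
      HasDerivAt φ (deriv φ x) x := by
  obtain ⟨R, hxR, hR⟩ : ∃ R, |x| < R ∧ 0 < R := ⟨|x| + 1, by linarith, by positivity⟩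
  obtain ⟨M, hM⟩ := exists_abs_mul_abs_pow_le (hconv (2 * R)).summable
  set g : ℕ → ℝ → ℝ := fun j y => a (j + 1) * y ^ (j + 1)
  set g' : ℕ → ℝ → ℝ := fun j y => ((j : ℝ) + 1) * a (j + 1) * y ^ j
  have hg : ∀ j y, HasDerivAt (g j) (g' j y) y := fun j y => by
    refine ((hasDerivAt_pow (j + 1) y).const_mul (a (j + 1))).congr_deriv ?_
    simp only [g', Nat.add_sub_cancel, Nat.cast_succ]
    ring
  have hbound : ∀ j, ∀ y ∈ Metric.ball (0 : ℝ) R,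
      ‖g' j y‖ ≤ M / (2 * R) * (((j : ℝ) + 1) * (1 / 2) ^ j) := fun j y hy =>
    abs_succ_mul_mul_pow_le hR hM (by simpa using (Metric.mem_ball.1 hy).le) j
  have hu := summable_succ_mul_half_pow.mul_left (M / (2 * R))
  have hx : x ∈ Metric.ball (0 : ℝ) R := by simpa using hxR
  have hφ : φ = fun y => (∑' j, g j y) + a 0 := by
    funext y
    have := ((hasSum_nat_add_iff' 1).2 (hconv y)).tsum_eq
    simp only [Finset.sum_range_one, pow_zero, mul_one] at this
    simp only [g, this]
    ring
  have hderiv : HasDerivAt φ (∑' j, g' j x) x := by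
    rw [hφ]
    refine (hasDerivAt_tsum_of_isPreconnected hu Metric.isOpen_ball
      (convex_ball 0 R).isPreconnected (fun j y _ => hg j y) hbound hx ?_ hx).add_const _
    exact ((hasSum_nat_add_iff' 1).2 (hconv x)).summable
  rw [hderiv.deriv]
  exact ⟨(Summable.of_norm_bounded hu fun j => hbound j x hx).hasSum, hderiv⟩

theorem exists_forall_hasSum_iteratedDeriv (hconv : ∀ x, HasSum (fun j => a j * x ^ j) (φ x))
    (k : ℕ) : ∃ b : ℕ → ℝ, ∀ x, HasSum (fun j => b j * x ^ j) (iteratedDeriv k φ x) := by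
  induction k with
  | zero => exact ⟨a, by simpa using hconv⟩
  | succ k ih =>
    obtain ⟨b, hb⟩ := ih
    refine ⟨fun j => ((j : ℝ) + 1) * b (j + 1), fun x => ?_⟩
    rw [iteratedDeriv_succ]
    exact (hasSum_deriv_and_hasDerivAt hb x).1

theorem contDiff_of_forall_hasSum (hconv : ∀ x, HasSum (fun j => a j * x ^ j) (φ x)) :
    ContDiff ℝ ∞ φ := by
  refine contDiff_of_differentiable_iteratedDeriv fun k _ x => ?_
  obtain ⟨b, hb⟩ := exists_forall_hasSum_iteratedDeriv hconv k
  exact (hasSum_deriv_and_hasDerivAt hb x).2.differentiableAt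

theorem hasSum_mul_deriv_sub (hconv : ∀ x, HasSum (fun j => a j * x ^ j) (φ x)) (c x : ℝ) :
    HasSum (fun j : ℕ => ((j : ℝ) - c) * a j * x ^ j) (x * deriv φ x - c * φ x) := by
  have hderiv : HasSum (fun j : ℕ => (j : ℝ) * a j * x ^ j) (x * deriv φ x) := by
    rw [← hasSum_nat_add_iff' 1]
    simpa [pow_succ, mul_assoc, mul_comm, mul_left_comm] using
      (hasSum_deriv_and_hasDerivAt hconv x).1.mul_left x
  exact (hderiv.sub ((hconv x).mul_left c)).congr_fun fun j => by ring

theorem ne_zero_of_signChangePairs_eq_empty (hconv : ∀ x, HasSum (fun j => a j * x ^ j) (φ x))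
    (hne : ∃ j, a j ≠ 0) (h : signChangePairs a = ∅) {x : ℝ} (hx : 0 < x) : φ x ≠ 0 := by
  obtain ⟨J, hJ⟩ := hne
  have hpos : 0 < a J * φ x := by
    refine hasSum_lt (f := 0) (i := J) (fun j => ?_) ?_ hasSum_zero ((hconv x).mul_left (a J))
    · simpa [← mul_assoc] using
        mul_nonneg (mul_nonneg_of_signChangePairs_eq_empty h J j) (pow_nonneg hx.le j)
    · simpa [← mul_assoc] using mul_pos (mul_self_pos.2 hJ) (pow_pos hx J)
  exact right_ne_zero_of_mul hpos.ne'

end PowerSeries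

section Zeros

theorem iteratedDeriv_mul_deriv_sub {f : ℝ → ℝ} (hf : ContDiff ℝ ∞ f) (c : ℝ) (k : ℕ) (x : ℝ) :
    iteratedDeriv k (fun y => y * deriv f y - c * f y) x =
      x * iteratedDeriv (k + 1) f x + (k - c) * iteratedDeriv k f x := by
  have hd : ∀ m y, HasDerivAt (iteratedDeriv m f) (iteratedDeriv (m + 1) f y) y := fun m y => by
    rw [iteratedDeriv_succ]
    exact (hf.differentiable_iteratedDeriv m (by exact_mod_cast ENat.natCast_lt_top m) y).hasDerivAt
  induction k generalizing x with
  | zero =>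
    simp only [iteratedDeriv_zero, zero_add, iteratedDeriv_one, Nat.cast_zero]
    ring
  | succ k ih =>
    rw [iteratedDeriv_succ, funext ih,
      (((hasDerivAt_id' x).fun_mul (hd (k + 1) x)).fun_add
        ((hd k x).const_mul ((k : ℝ) - c))).deriv]
    push_cast
    ring

theorem exists_mul_deriv_sub_eq_zero {f : ℝ → ℝ} (hf : Differentiable ℝ f) (c : ℝ) {x y : ℝ}
    (hx : 0 < x) (hxy : x < y) (hfx : f x = 0) (hfy : f y = 0) :
    ∃ w ∈ Set.Ioo x y, w * deriv f w - c * f w = 0 := by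
  have hF : ∀ t, 0 < t → HasDerivAt (fun t => f t * t ^ (-c))
      (t ^ (-c) / t * (t * deriv f t - c * f t)) t := fun t ht => by
    refine ((hf t).hasDerivAt.mul (Real.hasDerivAt_rpow_const (Or.inl ht.ne'))).congr_deriv ?_
    rw [Real.rpow_sub_one ht.ne']
    field_simp
    ring
  obtain ⟨w, hw, hw0⟩ := exists_hasDerivAt_eq_zero hxy
    (fun t ht => (hF t (hx.trans_le ht.1)).continuousAt.continuousWithinAt) (by simp [hfx, hfy])
    fun t ht => hF t (hx.trans ht.1)
  have hw_pos : 0 < w := hx.trans hw.1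
  exact ⟨w, hw, (mul_eq_zero.1 hw0).resolve_left (by positivity)⟩

theorem exists_finset_interlacing {α : Type*} [LinearOrder α] (Z : Finset α) (P : α → Prop)
    (hP : ∀ x ∈ Z, ∀ y ∈ Z, x < y → ∃ w ∈ Set.Ioo x y, P w) :
    ∃ W : Finset α, Z.card ≤ W.card + 1 ∧ Disjoint W Z ∧ ∀ w ∈ W, P w ∧ ∃ z ∈ Z, w < z := by
  classical
  induction Z using Finset.induction_on_max with
  | empty => exact ⟨∅, by simp⟩
  | insert m s hlt ih =>
    obtain ⟨W, hcard, hdisj, hW⟩ := ih fun x hx y hy =>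
      hP x (Finset.mem_insert_of_mem hx) y (Finset.mem_insert_of_mem hy)
    rcases s.eq_empty_or_nonempty with rfl | hs
    · exact ⟨∅, by simp⟩
    obtain ⟨w, ⟨hsw, hwm⟩, hPw⟩ := hP (s.max' hs) (Finset.mem_insert_of_mem (s.max'_mem hs)) m
      (Finset.mem_insert_self m s) (hlt _ (s.max'_mem hs))
    have hs_lt : ∀ z ∈ s, z < w := fun z hz => (s.le_max' z hz).trans_lt hsw
    have hwW : w ∉ W := fun hw => by
      obtain ⟨z, hz, hwz⟩ := (hW w hw).2
      exact (hs_lt z hz).asymm hwz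
    have hmW : m ∉ W := fun hm => by
      obtain ⟨z, hz, hmz⟩ := (hW m hm).2
      exact (hlt z hz).asymm hmz
    refine ⟨insert w W, ?_, ?_, ?_⟩
    · rw [Finset.card_insert_of_notMem hwW, Finset.card_insert_of_notMem fun hm => (hlt m hm).false]
      omega
    · rw [Finset.disjoint_insert_left, Finset.disjoint_insert_right]
      exact ⟨Finset.mem_insert.not.2 (not_or.2 ⟨hwm.ne, fun h => (hs_lt w h).false⟩), hmW, hdisj⟩
    · intro v hv
      rcases Finset.mem_insert.1 hv with rfl | hv
      · exact ⟨hPw, m, Finset.mem_insert_self m s, hwm⟩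
      · obtain ⟨hPv, z, hz, hvz⟩ := hW v hv
        exact ⟨hPv, z, Finset.mem_insert_of_mem hz, hvz⟩

theorem sum_le_sum_filter_union_add_one {α : Type*} [DecidableEq α] {Z W : Finset α}
    {mult : α → ℕ} (hmult : ∀ z ∈ Z, 1 ≤ mult z) (hdisj : Disjoint W Z)
    (hcard : Z.card ≤ W.card + 1) :
    ∑ z ∈ Z, mult z ≤
      ∑ z ∈ Z.filter (2 ≤ mult ·) ∪ W, (if z ∈ Z then mult z - 1 else 1) + 1 := by
  have hZ₂ : ∑ z ∈ Z.filter (2 ≤ mult ·), (if z ∈ Z then mult z - 1 else 1) =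
      ∑ z ∈ Z, (mult z - 1) := by
    rw [Finset.sum_congr rfl fun z hz => if_pos (Finset.mem_filter.1 hz).1]
    exact Finset.sum_filter_of_ne fun z _ h => by omega
  have hW : ∑ z ∈ W, (if z ∈ Z then mult z - 1 else 1) = W.card := by
    rw [Finset.card_eq_sum_ones]
    exact Finset.sum_congr rfl fun z hz => if_neg (Finset.disjoint_left.1 hdisj hz)
  have hZ : ∑ z ∈ Z, mult z = ∑ z ∈ Z, (mult z - 1) + Z.card := by
    rw [Finset.card_eq_sum_ones, ← Finset.sum_add_distrib]
    exact Finset.sum_congr rfl fun z hz => by have := hmult z hz; omega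
  rw [Finset.sum_union (Finset.disjoint_of_subset_left (Finset.filter_subset _ _) hdisj.symm),
    hZ₂, hW, hZ]
  omega

def HasPosZeros (f : ℝ → ℝ) (Z : Finset ℝ) (mult : ℝ → ℕ) : Prop :=
  ∀ z ∈ Z, 0 < z ∧ 1 ≤ mult z ∧ ∀ k < mult z, iteratedDeriv k f z = 0

variable {φ ψ : ℝ → ℝ} {Z : Finset ℝ} {mult : ℝ → ℕ}

theorem HasPosZeros.apply_eq_zero (hZ : HasPosZeros φ Z mult) {z : ℝ} (hz : z ∈ Z) : φ z = 0 := by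
  simpa using (hZ z hz).2.2 0 (hZ z hz).2.1

theorem HasPosZeros.exists_of_rolle (hZ : HasPosZeros φ Z mult)
    (hrolle : ∀ x y, 0 < x → x < y → φ x = 0 → φ y = 0 → ∃ w ∈ Set.Ioo x y, ψ w = 0)
    (hdrop : ∀ z k, iteratedDeriv k φ z = 0 → iteratedDeriv (k + 1) φ z = 0 →
      iteratedDeriv k ψ z = 0) :
    ∃ Z' mult', HasPosZeros ψ Z' mult' ∧ ∑ z ∈ Z, mult z ≤ ∑ z ∈ Z', mult' z + 1 := by
  classical
  obtain ⟨W, hcard, hdisj, hW⟩ := exists_finset_interlacing Z (fun w => 0 < w ∧ ψ w = 0)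
    fun x hx y hy hxy => by
      obtain ⟨w, hw, hψ⟩ := hrolle x y (hZ x hx).1 hxy (hZ.apply_eq_zero hx) (hZ.apply_eq_zero hy)
      exact ⟨w, hw, (hZ x hx).1.trans hw.1, hψ⟩
  set mult' : ℝ → ℕ := fun z => if z ∈ Z then mult z - 1 else 1
  refine ⟨Z.filter (2 ≤ mult ·) ∪ W, mult', fun z hz => ?_, ?_⟩
  · rcases Finset.mem_union.1 hz with hz | hz
    · obtain ⟨hzZ, h2⟩ := Finset.mem_filter.1 hz
      obtain ⟨hpos, -, hk⟩ := hZ z hzZ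
      simp only [mult', hzZ, if_true]
      exact ⟨hpos, by omega, fun k hk' => hdrop z k (hk k (by omega)) (hk (k + 1) (by omega))⟩
    · simp only [mult', Finset.disjoint_left.1 hdisj hz, if_false]
      refine ⟨(hW z hz).1.1, le_rfl, fun k hk => ?_⟩
      obtain rfl : k = 0 := by omega
      simpa using (hW z hz).1.2
  · exact sum_le_sum_filter_union_add_one (fun z hz => (hZ z hz).2.1) hdisj hcard

end Zeros

theorem HasPosZeros.eq_empty_of_signChangePairs_eq_empty {a : ℕ → ℝ} {φ : ℝ → ℝ} {Z : Finset ℝ}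
    {mult : ℝ → ℕ} (hZ : HasPosZeros φ Z mult)
    (hconv : ∀ x, HasSum (fun j => a j * x ^ j) (φ x)) (hne : ∃ j, a j ≠ 0)
    (h : signChangePairs a = ∅) : Z = ∅ :=
  Finset.eq_empty_of_forall_notMem fun z hz =>
    ne_zero_of_signChangePairs_eq_empty hconv hne h (hZ z hz).1 (hZ.apply_eq_zero hz)

theorem sum_mult_le_encard_signChangePairs (n : ℕ) {a : ℕ → ℝ} {φ : ℝ → ℝ}
    (hconv : ∀ x, HasSum (fun j => a j * x ^ j) (φ x)) (hne : ∃ j, a j ≠ 0)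
    (hn : (signChangePairs a).encard ≤ n) {Z : Finset ℝ} {mult : ℝ → ℕ}
    (hZ : HasPosZeros φ Z mult) :
    ((∑ z ∈ Z, mult z : ℕ) : ℕ∞) ≤ (signChangePairs a).encard := by
  induction n generalizing a φ Z mult with
  | zero =>
    have h : signChangePairs a = ∅ := Set.encard_eq_zero.1 (nonpos_iff_eq_zero.1 hn)
    simp [hZ.eq_empty_of_signChangePairs_eq_empty hconv hne h]
  | succ n ih =>
    rcases (signChangePairs a).eq_empty_or_nonempty with h | ⟨⟨i, c⟩, hic⟩
    · simp [hZ.eq_empty_of_signChangePairs_eq_empty hconv hne h]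
    have hsmooth := contDiff_of_forall_hasSum hconv
    have hcount := encard_signChangePairs_sub_mul_add_one_le hic
    obtain ⟨Z', mult', hZ', hsum⟩ := hZ.exists_of_rolle
      (ψ := fun y => y * deriv φ y - c * φ y)
      (fun x y hx hxy hfx hfy =>
        exists_mul_deriv_sub_eq_zero (hsmooth.differentiable (by simp)) c hx hxy hfx hfy)
      (fun z k h₀ h₁ => by simp [iteratedDeriv_mul_deriv_sub hsmooth, h₀, h₁])
    have hne' : ∃ j : ℕ, ((j : ℝ) - c) * a j ≠ 0 :=
      ⟨i, mul_ne_zero (sub_ne_zero.2 (by exact_mod_cast hic.1.ne)) (left_ne_zero_of_mul hic.2.1.ne)⟩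
    have hn' : (signChangePairs fun j => ((j : ℝ) - c) * a j).encard ≤ n :=
      (ENat.add_le_add_iff_right ENat.one_ne_top).1 (hcount.trans (by exact_mod_cast hn))
    calc ((∑ z ∈ Z, mult z : ℕ) : ℕ∞) ≤ ((∑ z ∈ Z', mult' z : ℕ) : ℕ∞) + 1 := by
          exact_mod_cast hsum
      _ ≤ (signChangePairs fun j => ((j : ℝ) - c) * a j).encard + 1 := by
          gcongr
          exact ih (hasSum_mul_deriv_sub hconv c) hne' hn' hZ'
      _ ≤ (signChangePairs a).encard := hcount

/-- Descartes' rule of signs for entire functions: if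
`φ(x) = ∑ j, a j x^j` is entire (the series converges everywhere) and not identically
zero, then the number of strictly positive zeros of `φ`, counted with multiplicity,
is at most the number of sign changes of the coefficient sequence `a`.
Multiplicity is expressed via vanishing of iterated derivatives. -/
theorem descartes_rule_of_signs_entire (a : ℕ → ℝ) (φ : ℝ → ℝ)
    (hconv : ∀ x : ℝ, HasSum (fun j => a j * x ^ j) (φ x))
    (hne : ∃ j, a j ≠ 0)
    (Z : Finset ℝ) (hZ : ∀ z ∈ Z, 0 < z ∧ φ z = 0)
    (mult : ℝ → ℕ) (hmult : ∀ z ∈ Z, 1 ≤ mult z ∧ ∀ k < mult z, iteratedDeriv k φ z = 0) :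
    (∑ z ∈ Z, (mult z : ℕ∞)) ≤ (signChangePairs a).encard := by
  rcases (signChangePairs a).finite_or_infinite with hfin | hinf
  · have hZ' : HasPosZeros φ Z mult := fun z hz => ⟨(hZ z hz).1, hmult z hz⟩
    simpa using sum_mult_le_encard_signChangePairs _ hconv hne hfin.cast_ncard_eq.ge hZ'
  · simp [hinf.encard_eq]
end

section
/- Let G be an s-subexponential prior on [0,∞) and Y ~ f_G the Poisson mixture. Then for every integer K ≥ 0, P[Y ≥ K] ≤ (3/2) e^{-K log(1 + 1/(2s))}. -/
open MeasureTheory Real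

/-- Poisson density with mean `θ` at point `y`. -/
noncomputable def poissonPdf (θ : ℝ) (y : ℕ) : ℝ :=
  Real.exp (-θ) * θ ^ y / (Nat.factorial y)

/-- Poisson mixture density `f_G`. -/
noncomputable def mixturePdf (G : Measure ℝ) (y : ℕ) : ℝ :=
  ∫ θ, poissonPdf θ y ∂G

/-!
Write `P_θ[Y ≥ K]` for the Poisson tail; the left-hand side is `∫ P_θ[Y ≥ K] dG(θ) ≤ 1`.
For `K = m + 1` the tail is `∫₀^θ p_m(t) dt`, where `p_m` is the Poisson density at `m`
(the `θ`-derivative of `P_θ[Y ≤ m]` telescopes to `-p_m(θ)`), so by the layer-cake formula the integral equals `∫₀^∞ p_m(t) G[t, ∞) dt`. The tail bound on `G`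
turns this into at most `2 ∫₀^∞ p_m(t) e^{-t/s} dt = 2 (1 + 1/s)^{-K}`, a Gamma integral.
With `b = 1 + 1/(2s)` one has `1 + 1/s = 2b - 1`, and convexity of `x ↦ x ^ K` gives
`(2b - 1)^K ≥ 2 b^K - 1`; hence `min (1, 2 (2b - 1)^{-K}) ≤ (3/2) b^{-K}`.
-/

open Finset

lemma poissonPdf_nonneg {θ : ℝ} (hθ : 0 ≤ θ) (y : ℕ) : 0 ≤ poissonPdf θ y := by
  unfold poissonPdf; positivity

@[fun_prop]
lemma continuous_poissonPdf (y : ℕ) : Continuous fun θ => poissonPdf θ y := by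
  unfold poissonPdf; fun_prop

lemma hasSum_poissonPdf (θ : ℝ) : HasSum (poissonPdf θ) 1 := by
  have h := (NormedSpace.expSeries_div_hasSum_exp θ).mul_left (exp (-θ))
  rw [← exp_eq_exp_ℝ, ← exp_add, neg_add_cancel, exp_zero] at h
  exact h.congr_fun fun y => mul_div_assoc _ _ _

lemma tsum_subtype_poissonPdf_le_one {θ : ℝ} (hθ : 0 ≤ θ) (S : Set ℕ) :
    ∑' y : S, poissonPdf θ y ≤ 1 :=
  (hasSum_poissonPdf θ).tsum_eq ▸
    (hasSum_poissonPdf θ).summable.tsum_subtype_le _ S (poissonPdf_nonneg hθ)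

noncomputable def poissonTail (θ : ℝ) (K : ℕ) : ℝ :=
  ∑' y : {y : ℕ // K ≤ y}, poissonPdf θ y

lemma poissonTail_eq_one_sub_sum (θ : ℝ) (K : ℕ) :
    poissonTail θ K = 1 - ∑ y ∈ range K, poissonPdf θ y := by
  have hcompl : ((range K : Set ℕ)ᶜ) = {y | K ≤ y} := by ext; simp
  rw [eq_sub_iff_add_eq', ← (hasSum_poissonPdf θ).tsum_eq,
    ← (hasSum_poissonPdf θ).summable.sum_add_tsum_compl (s := range K),
    tsum_congr_set_coe _ hcompl]
  rfl

lemma poissonTail_nonneg {θ : ℝ} (hθ : 0 ≤ θ) (K : ℕ) : 0 ≤ poissonTail θ K :=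
  tsum_nonneg fun y => poissonPdf_nonneg hθ y

@[fun_prop]
lemma continuous_poissonTail (K : ℕ) : Continuous fun θ => poissonTail θ K := by
  simp_rw [poissonTail_eq_one_sub_sum]; fun_prop

lemma hasDerivAt_poissonPdf_zero (θ : ℝ) :
    HasDerivAt (fun x => poissonPdf x 0) (-poissonPdf θ 0) θ := by
  simpa [poissonPdf] using (hasDerivAt_neg θ).exp

lemma hasDerivAt_poissonPdf_succ (θ : ℝ) (y : ℕ) :
    HasDerivAt (fun x => poissonPdf x (y + 1)) (poissonPdf θ y - poissonPdf θ (y + 1)) θ := by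
  refine (((hasDerivAt_neg θ).exp.fun_mul (hasDerivAt_pow (y + 1) θ)).div_const
    ((y + 1).factorial : ℝ)).congr_deriv ?_
  simp only [poissonPdf, Nat.factorial_succ, Nat.cast_mul, Nat.add_sub_cancel]
  field_simp
  push_cast
  ring

lemma hasDerivAt_sum_range_poissonPdf (θ : ℝ) (m : ℕ) :
    HasDerivAt (fun x => ∑ y ∈ range (m + 1), poissonPdf x y) (-poissonPdf θ m) θ := by
  induction m with
  | zero => simpa using hasDerivAt_poissonPdf_zero θ
  | succ m ih =>
    simp_rw [sum_range_succ _ (m + 1)]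
    exact (ih.fun_add (hasDerivAt_poissonPdf_succ θ m)).congr_deriv (by ring)

lemma poissonTail_succ_eq_integral (θ : ℝ) (m : ℕ) :
    poissonTail θ (m + 1) = ∫ t in 0..θ, poissonPdf t m := by
  have hderiv : ∀ t ∈ Set.uIcc 0 θ, HasDerivAt (fun x => -∑ y ∈ range (m + 1), poissonPdf x y)
      (poissonPdf t m) t := fun t _ => by simpa using (hasDerivAt_sum_range_poissonPdf t m).fun_neg
  rw [intervalIntegral.integral_eq_sub_of_hasDerivAt hderiv
    ((continuous_poissonPdf m).intervalIntegrable _ _), poissonTail_eq_one_sub_sum]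
  simp [poissonPdf, sum_range_succ']
  ring

lemma integral_exp_neg_div_mul_poissonPdf {s : ℝ} (hs : 0 < s) (m : ℕ) :
    ∫ t in Set.Ioi 0, exp (-t / s) * poissonPdf t m = 1 / (1 + 1 / s) ^ (m + 1) := by
  have hr : 0 < 1 + 1 / s := by positivity
  have hgamma := integral_rpow_mul_exp_neg_mul_Ioi (a := m + 1) (by positivity) hr
  rw [add_sub_cancel_right, Real.Gamma_nat_eq_factorial] at hgamma
  calc ∫ t in Set.Ioi 0, exp (-t / s) * poissonPdf t m
      = (∫ t in Set.Ioi 0, t ^ (m : ℝ) * exp (-((1 + 1 / s) * t))) / m.factorial := by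
        rw [← integral_div]
        refine setIntegral_congr_fun measurableSet_Ioi fun t _ => ?_
        rw [poissonPdf, rpow_natCast, mul_comm (1 + 1 / s), mul_one_add, neg_add, exp_add,
          mul_one_div, neg_div]
        ring
    _ = 1 / (1 + 1 / s) ^ (m + 1) := by
        rw [hgamma, ← rpow_natCast, Nat.cast_add_one, div_rpow zero_le_one hr.le, one_rpow]
        field_simp

section Mixture

variable {G : Measure ℝ}

lemma hasSum_mixturePdf_subtype [IsFiniteMeasure G] (hsupp : ∀ᵐ θ ∂G, 0 ≤ θ)
    (S : Set ℕ) : HasSum (fun y : S => mixturePdf G y) (∫ θ, ∑' y : S, poissonPdf θ y ∂G) := by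
  have hsum (θ : ℝ) : Summable fun y : S => poissonPdf θ y :=
    (hasSum_poissonPdf θ).summable.subtype S
  have hint : Integrable (fun θ => ∑' y : S, poissonPdf θ y) G := by
    refine (integrable_const (1 : ℝ)).mono'
      (Measurable.tsum (f := fun (y : S) θ => poissonPdf θ y) fun y =>
        (continuous_poissonPdf y).measurable).aestronglyMeasurable ?_
    filter_upwards [hsupp] with θ hθ
    rw [Real.norm_of_nonneg (tsum_nonneg fun y : S => poissonPdf_nonneg hθ y)]
    exact tsum_subtype_poissonPdf_le_one hθ S
  exact hasSum_integral_of_dominated_convergence (fun y θ => poissonPdf θ y)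
    (fun y => (continuous_poissonPdf y).aestronglyMeasurable)
    (fun y => hsupp.mono fun θ hθ => (Real.norm_of_nonneg (poissonPdf_nonneg hθ y)).le)
    (ae_of_all _ hsum) hint (ae_of_all _ fun θ => (hsum θ).hasSum)

lemma lintegral_poissonTail_le_one [IsProbabilityMeasure G]
    (hsupp : ∀ᵐ θ ∂G, 0 ≤ θ) (K : ℕ) : ∫⁻ θ, ENNReal.ofReal (poissonTail θ K) ∂G ≤ 1 := by
  calc ∫⁻ θ, ENNReal.ofReal (poissonTail θ K) ∂G ≤ ∫⁻ _, 1 ∂G :=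
        lintegral_mono_ae <| hsupp.mono fun θ hθ =>
          ENNReal.ofReal_le_one.2 (tsum_subtype_poissonPdf_le_one hθ {y | K ≤ y})
    _ = 1 := by simp

lemma lintegral_poissonTail_succ_le (hsupp : ∀ᵐ θ ∂G, 0 ≤ θ) {C s : ℝ}
    (hs : 0 < s) (htail : ∀ t : ℝ, 0 < t → G {θ | t ≤ θ} ≤ ENNReal.ofReal (C * exp (-t / s)))
    (m : ℕ) :
    ∫⁻ θ, ENNReal.ofReal (poissonTail θ (m + 1)) ∂G
      ≤ ENNReal.ofReal (C / (1 + 1 / s) ^ (m + 1)) := by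
  have hgamma := integral_exp_neg_div_mul_poissonPdf hs m
  have hint : IntegrableOn (fun t => exp (-t / s) * poissonPdf t m) (Set.Ioi 0) :=
    .of_integral_ne_zero (by rw [hgamma]; positivity)
  calc ∫⁻ θ, ENNReal.ofReal (poissonTail θ (m + 1)) ∂G
      = ∫⁻ θ, ENNReal.ofReal (∫ t in 0..θ, poissonPdf t m) ∂G := by
        simp_rw [poissonTail_succ_eq_integral]
    _ = ∫⁻ t in Set.Ioi 0, G {θ | t ≤ θ} * ENNReal.ofReal (poissonPdf t m) :=
        lintegral_comp_eq_lintegral_meas_le_mul G hsupp aemeasurable_id'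
          (fun t _ => (continuous_poissonPdf m).intervalIntegrable _ _)
          ((ae_restrict_iff' measurableSet_Ioi).2 (ae_of_all _ fun t ht =>
            poissonPdf_nonneg ht.le m))
    _ ≤ ∫⁻ t in Set.Ioi 0, ENNReal.ofReal C * ENNReal.ofReal (exp (-t / s) * poissonPdf t m) :=
        setLIntegral_mono' measurableSet_Ioi fun t ht => by
          rw [← ENNReal.ofReal_mul' (mul_nonneg (by positivity) (poissonPdf_nonneg ht.le m)),
            ← mul_assoc, ENNReal.ofReal_mul' (poissonPdf_nonneg ht.le m)]
          gcongr
          exact htail t ht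
    _ = ENNReal.ofReal (C / (1 + 1 / s) ^ (m + 1)) := by
        rw [lintegral_const_mul' _ _ ENNReal.ofReal_ne_top, ← ofReal_integral_eq_lintegral_ofReal
          hint ((ae_restrict_iff' measurableSet_Ioi).2 (ae_of_all _ fun t ht =>
            mul_nonneg (exp_pos _).le (poissonPdf_nonneg ht.le m))), hgamma,
          ← ENNReal.ofReal_mul' (by positivity), mul_one_div]

lemma integral_poissonTail_le_min [IsProbabilityMeasure G]
    (hsupp : ∀ᵐ θ ∂G, 0 ≤ θ) {C s : ℝ} (hC : 1 ≤ C) (hs : 0 < s)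
    (htail : ∀ t : ℝ, 0 < t → G {θ | t ≤ θ} ≤ ENNReal.ofReal (C * exp (-t / s))) (K : ℕ) :
    ∫ θ, poissonTail θ K ∂G ≤ min 1 (C / (1 + 1 / s) ^ K) := by
  rw [integral_eq_lintegral_of_nonneg_ae (hsupp.mono fun θ hθ => poissonTail_nonneg hθ K)
    (continuous_poissonTail K).aestronglyMeasurable]
  refine ENNReal.toReal_le_of_le_ofReal (le_min zero_le_one (by positivity)) ?_
  rw [ENNReal.ofReal_min, ENNReal.ofReal_one]
  refine le_min (lintegral_poissonTail_le_one hsupp K) ?_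
  cases K with
  | zero => simpa using (lintegral_poissonTail_le_one hsupp 0).trans (ENNReal.one_le_ofReal.2 hC)
  | succ m => exact lintegral_poissonTail_succ_le hsupp hs htail m

end Mixture

lemma min_one_two_div_pow_le {b : ℝ} (hb : 1 ≤ b) (K : ℕ) :
    min 1 (2 / (2 * b - 1) ^ K) ≤ 3 / 2 / b ^ K := by
  have hconv : 2 * b ^ K - 1 ≤ (2 * b - 1) ^ K := by
    have h := (convexOn_pow K).2 (Set.mem_Ici.2 (by linarith : (0 : ℝ) ≤ 2 * b - 1))
      (Set.mem_Ici.2 zero_le_one) (by norm_num : (0 : ℝ) ≤ 1 / 2) (by norm_num : (0 : ℝ) ≤ 1 / 2)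
      (by norm_num)
    simp only [smul_eq_mul, one_pow] at h
    rw [show 1 / 2 * (2 * b - 1) + 1 / 2 * 1 = b by ring] at h
    linarith
  have hbK : 0 < b ^ K := by positivity
  rcases le_or_gt (b ^ K) (3 / 2) with hsmall | hlarge
  · exact (min_le_left _ _).trans ((le_div_iff₀ hbK).2 (by linarith))
  · refine (min_le_right _ _).trans ?_
    rw [div_le_div_iff₀ (by nlinarith) hbK]
    linarith

/-- if `G` is an `s`-subexponential prior on `[0,∞)` and `Y ~ f_G`, then
for every `K ≥ 0`, `P[Y ≥ K] ≤ (3/2) e^{-K log(1+1/(2s))}`. -/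
theorem tail_poisson_mixture_subexp (s : ℝ) (hs : 0 < s)
    (G : Measure ℝ) [IsProbabilityMeasure G] (hsupp : ∀ᵐ θ ∂G, 0 ≤ θ)
    (htail : ∀ t : ℝ, 0 < t → G {θ | t ≤ θ} ≤ ENNReal.ofReal (2 * Real.exp (-t / s)))
    (K : ℕ) :
    ∑' y : {y : ℕ // K ≤ y}, mixturePdf G y
      ≤ (3 / 2) * Real.exp (-(K : ℝ) * Real.log (1 + 1 / (2 * s))) := by
  have hb : 1 ≤ 1 + 1 / (2 * s) := le_add_of_nonneg_right (by positivity)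
  have ha : 2 * (1 + 1 / (2 * s)) - 1 = 1 + 1 / s := by field_simp; ring
  have hrhs : 3 / 2 * exp (-(K : ℝ) * log (1 + 1 / (2 * s))) = 3 / 2 / (1 + 1 / (2 * s)) ^ K := by
    rw [neg_mul, exp_neg, exp_nat_mul, exp_log (by positivity), ← div_eq_mul_inv]
  calc ∑' y : {y // K ≤ y}, mixturePdf G y = ∫ θ, poissonTail θ K ∂G :=
        (hasSum_mixturePdf_subtype hsupp {y | K ≤ y}).tsum_eq
    _ ≤ min 1 (2 / (1 + 1 / s) ^ K) := integral_poissonTail_le_min hsupp one_le_two hs htail K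
    _ ≤ _ := hrhs ▸ ha ▸ min_one_two_div_pow_le hb K
end
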